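/- If some round of a core-language algorithm has no uni instruction, then for every phase predicate ψ there is a phase transition solo →ψ solo in which no process decides; consequently the algorithm does not have the termination property. -/

import Mathlib

open Classical

namespace HO

/-! ### Values

`none` is the undefined value `?`; defined values are natural numbers, where
`some 0` plays the role of `a` and `some 1` the role of `b` (so `a < b`). -/

abbrev Val := Option ℕ

def aVal : ℕ := 0
def bVal : ℕ := 1

/-! ### Operations -/

inductive Op where
  | min : Op
  | smor : Op

/-- Minimum of a multiset of defined values (`none` if the multiset is empty). -/
noncomputable def msMin (S : Multiset ℕ) : Option ℕ :=
  if h : S.toFinset.Nonempty then some (S.toFinset.min' h) else none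

/-- Smallest most frequent value of a multiset (`none` if the multiset is empty). -/
noncomputable def msSmor (S : Multiset ℕ) : Option ℕ :=
  if h : (S.toFinset.filter fun v => ∀ w ∈ S.toFinset, S.count w ≤ S.count v).Nonempty
  then some ((S.toFinset.filter fun v => ∀ w ∈ S.toFinset, S.count w ≤ S.count v).min' h)
  else none

noncomputable def Op.apply : Op → Multiset ℕ → Option ℕ
  | Op.min, S => msMin S
  | Op.smor, S => msSmor S

/-! ### Rounds

A round consists of at most one `uni` instruction followed by a list of `mult`
instructions with non-increasing thresholds, all thresholds lying in `[0,1)`. -/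

structure Round where
  uniThr : Option ℝ
  mults : List (ℝ × Op)
  wfU : ∀ t ∈ uniThr, 0 ≤ t ∧ t < 1
  wfM : ∀ q ∈ mults, 0 ≤ q.1 ∧ q.1 < 1
  sorted : (mults.map Prod.fst).Chain' (· ≥ ·)

def Round.hasUni (R : Round) : Prop := R.uniThr.isSome = true
def Round.hasMult (R : Round) : Prop := R.mults ≠ []

/-- `thr_u^i`: the threshold of the uni instruction, `-1` if absent. -/
noncomputable def Round.thrU (R : Round) : ℝ := R.uniThr.getD (-1)

noncomputable def minThr : List ℝ → ℝ
  | [] => -1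
  | [t] => t
  | t :: ts => min t (minThr ts)

/-- `thr_m^{i,k}`: the smallest threshold of a mult instruction, `-1` if absent. -/
noncomputable def Round.thrM (R : Round) : ℝ := minThr (R.mults.map Prod.fst)

/-- Result of the first applicable `mult` instruction. -/
noncomputable def firstMult (n : ℕ) (S : Multiset ℕ) : List (ℝ × Op) → Option ℕ
  | [] => none
  | (t, op) :: rest =>
      if 1 < S.toFinset.card ∧ t * n < (S.card : ℝ) then op.apply S
      else firstMult n S rest

/-- `update_i(H)`: the result of the first instruction of the round whose condition
is satisfied by `H − {?}`, and `?` (i.e. `none`) if no condition applies. -/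
noncomputable def Round.update (R : Round) (n : ℕ) (H : Multiset Val) : Option ℕ :=
  if ∃ t ∈ R.uniThr,
      (H.filterMap id).toFinset.card = 1 ∧ t * n < ((H.filterMap id).card : ℝ)
  then msMin (H.filterMap id)
  else firstMult n (H.filterMap id) R.mults

/-! ### Communication predicates for a round -/

/-- A conjunction of atomic communication predicates for one round: possibly
`φ_=` (field `eq`) and possibly `φ_thr` (field `thr`, with `0 ≤ thr < 1`). -/
structure RoundPred where
  eq : Bool
  thr : Option ℝ
  wf : ∀ t ∈ thr, 0 ≤ t ∧ t < 1

/-- `thr_i(ψ)`: the threshold appearing in the predicate, `-1` if absent. -/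
noncomputable def RoundPred.thrVal (φ : RoundPred) : ℝ := φ.thr.getD (-1)

def RoundPred.isEqualizer (φ : RoundPred) : Prop := φ.eq = true

/-- Satisfaction of a round predicate by a tuple of heard-of multisets. -/
def RoundPred.sat {α : Type} (φ : RoundPred) (n : ℕ) (Hs : Fin n → Multiset α) : Prop :=
  (φ.eq = true → ∀ p q, Hs p = Hs q) ∧
  ∀ t ∈ φ.thr, ∀ p, t * n < ((Hs p).card : ℝ)

/-- Logical implication between round predicates. -/
def RoundPred.implies (φ φ' : RoundPred) : Prop :=
  ∀ (α : Type) (n : ℕ) (Hs : Fin n → Multiset α), φ.sat n Hs → φ'.sat n Hs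

/-! ### Tuples of values -/

/-- The multiset of values of a tuple. -/
def msetOf {n : ℕ} (f : Fin n → Val) : Multiset Val := Finset.univ.val.map f

def soloB (n : ℕ) : Fin n → Val := fun _ => some bVal
def soloA (n : ℕ) : Fin n → Val := fun _ => some aVal
def soloQ (n : ℕ) : Fin n → Val := fun _ => none

/-- `bias(θ)`: a tuple over `{a,b}` with `θ·n` entries equal to `b`. -/
def isBias {n : ℕ} (θ : ℝ) (f : Fin n → Val) : Prop :=
  (∀ p, f p = some aVal ∨ f p = some bVal) ∧
  ((Finset.univ.filter fun p => f p = some bVal).card : ℝ) = θ * n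

/-- `spread = bias(1/2)`. -/
def isSpread {n : ℕ} (f : Fin n → Val) : Prop := isBias (1/2) f

/-- `bias^?(θ)`: a tuple over `{?,b}` with `θ·n` entries equal to `b`. -/
def isBiasQ {n : ℕ} (θ : ℝ) (f : Fin n → Val) : Prop :=
  (∀ p, f p = none ∨ f p = some bVal) ∧
  ((Finset.univ.filter fun p => f p = some bVal).card : ℝ) = θ * n

/-- `bias_a^?(θ)`: a tuple over `{?,a}` with `θ·n` entries equal to `a`. -/
def isBiasQa {n : ℕ} (θ : ℝ) (f : Fin n → Val) : Prop :=
  (∀ p, f p = none ∨ f p = some aVal) ∧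
  ((Finset.univ.filter fun p => f p = some aVal).card : ℝ) = θ * n

/-! ### Round transitions -/

/-- Round transition `f →[φ]_i f'`: every process receives a sub-multiset of the
multiset of sent values, the tuple of heard-of multisets jointly satisfies `φ`,
and every process updates its variable accordingly. -/
def roundTrans (R : Round) (φ : RoundPred) {n : ℕ} (f f' : Fin n → Val) : Prop :=
  ∃ Hs : Fin n → Multiset Val,
    (∀ p, Hs p ≤ msetOf f) ∧ φ.sat n Hs ∧ ∀ p, f' p = R.update n (Hs p)

/-- `d ∈ fire_i(f,φ)`. -/
def fire (R : Round) (φ : RoundPred) {n : ℕ} (f : Fin n → Val) (d : Val) : Prop :=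
  ∃ f' : Fin n → Val, roundTrans R φ f f' ∧ ∃ p, f' p = d

/-! ### Algorithms -/

/-- An algorithm of the core language: rounds `1,…,r` (`r ≥ 2`), with a designated
input-update round `ir` (`1 ≤ ir < r`). -/
structure Algo where
  r : ℕ
  rounds : ℕ → Round
  ir : ℕ
  two_le_r : 2 ≤ r
  one_le_ir : 1 ≤ ir
  ir_lt_r : ir < r

noncomputable def Algo.thrU (A : Algo) (i : ℕ) : ℝ := (A.rounds i).thrU
noncomputable def Algo.thrM (A : Algo) (i : ℕ) : ℝ := (A.rounds i).thrM
def Algo.hasUni (A : Algo) (i : ℕ) : Prop := (A.rounds i).hasUni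
def Algo.hasMult (A : Algo) (i : ℕ) : Prop := (A.rounds i).hasMult

/-- A phase predicate: a conjunction of atomic predicates for every round. -/
abbrev PhasePred := ℕ → RoundPred

/-- Phase transition `(f,d) →ψ (f',d')`. -/
def phaseTrans (A : Algo) (ψ : PhasePred) {n : ℕ} (f d f' d' : Fin n → Val) : Prop :=
  ∃ g : ℕ → Fin n → Val,
    g 0 = f ∧
    (∀ i, 1 ≤ i → i ≤ A.r → roundTrans (A.rounds i) (ψ i) (g (i - 1)) (g i)) ∧
    (∀ p, f' p = if g A.ir p = none then f p else g A.ir p) ∧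
    (∀ p, d' p = if d p = none then g A.r p else d p)

/-- A chain of round transitions for rounds `k,…,l`. -/
def roundChain (A : Algo) (ψ : PhasePred) (k l : ℕ) {n : ℕ} (f f' : Fin n → Val) : Prop :=
  ∃ g : ℕ → Fin n → Val,
    g (k - 1) = f ∧ g l = f' ∧
    ∀ i, k ≤ i → i ≤ l → roundTrans (A.rounds i) (ψ i) (g (i - 1)) (g i)

/-! ### Syntactic notions -/

/-- Round `i` is preserving w.r.t. `ψ`. -/
def Algo.preserving (A : Algo) (ψ : PhasePred) (i : ℕ) : Prop :=
  ¬ A.hasUni i ∨ ¬ A.hasMult i ∨ (ψ i).thrVal < max (A.thrU i) (A.thrM i)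

/-- Round `i` is solo-safe w.r.t. `ψ`. -/
def Algo.soloSafe (A : Algo) (ψ : PhasePred) (i : ℕ) : Prop :=
  0 ≤ A.thrU i ∧ A.thrU i ≤ (ψ i).thrVal

/-- The border threshold `thr̄ = max(1 − thr_u^1, 1 − thr_m^{1,k}/2)`. -/
noncomputable def Algo.borderThr (A : Algo) : ℝ :=
  max (1 - A.thrU 1) (1 - A.thrM 1 / 2)

/-- `ψ` is a decider: all rounds are solo-safe w.r.t. `ψ`. -/
def Algo.decider (A : Algo) (ψ : PhasePred) : Prop :=
  ∀ i, 1 ≤ i → i ≤ A.r → A.soloSafe ψ i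

/-- `ψ` is a unifier. -/
def Algo.unifier (A : Algo) (ψ : PhasePred) : Prop :=
  A.thrM 1 ≤ (ψ 1).thrVal ∧
  (A.thrU 1 ≤ (ψ 1).thrVal ∨ A.borderThr ≤ (ψ 1).thrVal) ∧
  ∃ i, 1 ≤ i ∧ i ≤ A.ir ∧ (ψ i).isEqualizer ∧
    (∀ j, 2 ≤ j → j ≤ i → ¬ A.preserving ψ j) ∧
    (∀ j, i < j → j ≤ A.ir → A.soloSafe ψ j)

/-- The algorithm is syntactically safe. -/
def Algo.syntSafe (A : Algo) : Prop :=
  A.hasMult 1 ∧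
  (∀ i, 1 ≤ i → i ≤ A.r → A.hasUni i) ∧
  (∀ q ∈ (A.rounds 1).mults, q.2 = Op.smor) ∧
  1 - A.thrU (A.ir + 1) ≤ A.thrM 1 / 2 ∧
  1 - A.thrU (A.ir + 1) ≤ A.thrU 1

/-- Assumption (A) relative to the global predicate `gl`. -/
def Algo.assumptionA (A : Algo) (gl : PhasePred) : Prop :=
  ∀ i, 1 ≤ i → i ≤ A.r →
    (∀ j, 1 ≤ j → j < i → ¬ A.preserving gl j) →
    (A.hasUni i → (gl i).thrVal ≤ A.thrU i) ∧
    (A.hasMult i → (gl i).thrVal ≤ A.thrM i)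

/-- Proviso (P): the global predicate has no equalizer and round `ir+1` has no
mult instruction. -/
def Algo.provisoP (A : Algo) (gl : PhasePred) : Prop :=
  (∀ i, 1 ≤ i → i ≤ A.r → ¬ (gl i).isEqualizer) ∧ ¬ A.hasMult (A.ir + 1)

/-- Removing all mult instructions of a round. -/
def Round.dropMults (R : Round) : Round :=
  { uniThr := R.uniThr, mults := [], wfU := R.wfU,
    wfM := by simp, sorted := by first | exact List.chain'_nil | exact List.IsChain.nil | exact List.isChain_nil | simp [List.Chain'] | trivial }

/-- Removing all mult instructions of round `i` of an algorithm. -/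
def Algo.dropMultsAt (A : Algo) (i : ℕ) : Algo :=
  { A with rounds := fun j => if j = i then (A.rounds j).dropMults else A.rounds j }

/-! ### Communication predicates, executions, consensus -/

/-- A communication predicate `(G ψ̄) ∧ F(ψ^1 ∧ F(ψ^2 ∧ … ∧ F ψ^k))`:
a global phase predicate and sporadic phase predicates `ψ^1,…,ψ^k`. -/
structure CommPred where
  glob : PhasePred
  k : ℕ
  spor : ℕ → PhasePred

/-- Roundwise implication between phase predicates of an algorithm. -/
def predImplies (A : Algo) (ψ ψ' : PhasePred) : Prop :=
  ∀ i, 1 ≤ i → i ≤ A.r → (ψ i).implies (ψ' i)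

/-- An execution of an algorithm respecting a communication predicate: an infinite
sequence of phase transitions under the global predicate, together with an
increasing sequence of times at which the sporadic predicates hold. -/
structure Exec (A : Algo) (C : CommPred) (n : ℕ) where
  inp : ℕ → Fin n → Val
  dec : ℕ → Fin n → Val
  inp0 : ∀ p, inp 0 p ≠ none
  dec0 : ∀ p, dec 0 p = none
  step : ∀ s, phaseTrans A C.glob (inp s) (dec s) (inp (s + 1)) (dec (s + 1))
  sporTime : ℕ → ℕ
  mono : StrictMono sporTime
  sporStep : ∀ i, 1 ≤ i → i ≤ C.k →
    phaseTrans A (C.spor i) (inp (sporTime i)) (dec (sporTime i))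
      (inp (sporTime i + 1)) (dec (sporTime i + 1))

/-- Agreement: in every reachable state, any two non-`?` decision values coincide. -/
def Agreement (A : Algo) (C : CommPred) : Prop :=
  ∀ n, 0 < n → ∀ E : Exec A C n, ∀ s p q v w,
    E.dec s p = some v → E.dec s q = some w → v = w

/-- Termination: every execution reaches a state where all processes have decided. -/
def Termination (A : Algo) (C : CommPred) : Prop :=
  ∀ n, 0 < n → ∀ E : Exec A C n, ∃ s, ∀ p, E.dec s p ≠ none

/-- Solving consensus: agreement and termination. -/
def SolvesConsensus (A : Algo) (C : CommPred) : Prop :=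
  Agreement A C ∧ Termination A C

/-! Let every process hear every sent value; since all thresholds lie below `1`, this
satisfies every round predicate. From `solo` (all `b`), a round with a uni instruction
yields `solo` again, while a round without one yields `solo^?`: the single value `b`
enables no mult instruction. From `solo^?` every round yields `solo^?`. Hence, once the
uni-free round is passed, the tuple is `solo^?` up to round `r`, so no process decides;
the input-update round leaves the inputs at `solo` in either case. Repeating this phase
forever gives an execution on one process that never terminates. -/

lemma msetOf_const {n : ℕ} (v : Val) :
    msetOf (fun _ : Fin n => v) = Multiset.replicate n v := by
  simp [msetOf]

lemma _root_.Multiset.filterMap_id_replicate_some {α : Type*} (n : ℕ) (a : α) :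
    (Multiset.replicate n (some a)).filterMap id = Multiset.replicate n a := by
  induction n with
  | zero => rfl
  | succ m ih => simp [Multiset.replicate_succ, ih]

lemma _root_.Multiset.filterMap_id_replicate_none {α : Type*} (n : ℕ) :
    (Multiset.replicate n (none : Option α)).filterMap id = 0 := by
  induction n with
  | zero => rfl
  | succ m ih => simp [Multiset.replicate_succ, ih]

lemma msetOf_soloB (n : ℕ) : msetOf (soloB n) = Multiset.replicate n (some bVal) :=
  msetOf_const _

lemma msetOf_soloQ (n : ℕ) : msetOf (soloQ n) = Multiset.replicate n none :=
  msetOf_const _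

lemma firstMult_eq_none_of_card_toFinset_le_one (n : ℕ) {S : Multiset ℕ}
    (hS : S.toFinset.card ≤ 1) (L : List (ℝ × Op)) : firstMult n S L = none := by
  induction L with
  | nil => rfl
  | cons q L ih => rw [firstMult, if_neg (by omega), ih]

namespace Round

lemma update_replicate_some (R : Round) (hU : R.hasUni) {n : ℕ} (hn : 0 < n) (v : ℕ) :
    R.update n (Multiset.replicate n (some v)) = some v := by
  obtain ⟨t, ht⟩ := Option.isSome_iff_exists.mp hU
  have hvals : (Multiset.replicate n v).toFinset = {v} := by
    simp [Multiset.toFinset_replicate, hn.ne']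
  have ht1 : t < 1 := (R.wfU t ht).2
  have hlt : t * n < n := by
    have : (0 : ℝ) < n := by exact_mod_cast hn
    nlinarith
  rw [update, Multiset.filterMap_id_replicate_some, if_pos ⟨t, ht, by simp [hvals], by simpa⟩]
  simp [msMin, hvals]

lemma update_eq_none_of_not_hasUni (R : Round) (hU : ¬ R.hasUni) (n : ℕ)
    {H : Multiset Val} (hH : (H.filterMap id).toFinset.card ≤ 1) : R.update n H = none := by
  have hnone : R.uniThr = none := by simpa [Round.hasUni] using hU
  rw [update, if_neg (by simp [hnone])]
  exact firstMult_eq_none_of_card_toFinset_le_one n hH _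

lemma update_replicate_none (R : Round) (n m : ℕ) :
    R.update n (Multiset.replicate m none) = none := by
  rw [update, Multiset.filterMap_id_replicate_none, if_neg (by simp)]
  exact firstMult_eq_none_of_card_toFinset_le_one n (by simp) _

end Round

lemma RoundPred.sat_const {α : Type} (φ : RoundPred) {n : ℕ} (hn : 0 < n) {H : Multiset α}
    (hH : H.card = n) : φ.sat n (fun _ => H) := by
  refine ⟨fun _ _ _ => rfl, fun t ht _ => ?_⟩
  have ht1 : t < 1 := (φ.wf t ht).2
  have hn' : (0 : ℝ) < n := by exact_mod_cast hn
  rw [hH]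
  nlinarith

lemma roundTrans_update_msetOf (R : Round) (φ : RoundPred) {n : ℕ} (hn : 0 < n)
    (f : Fin n → Val) : roundTrans R φ f (fun _ => R.update n (msetOf f)) :=
  ⟨fun _ => msetOf f, fun _ => le_rfl, φ.sat_const hn (by simp [msetOf]), fun _ => rfl⟩

namespace Algo

noncomputable def soloRun (A : Algo) (n j : ℕ) : Fin n → Val :=
  if ∀ k, 1 ≤ k → k ≤ j → A.hasUni k then soloB n else soloQ n

lemma roundTrans_soloRun (A : Algo) (ψ : PhasePred) {n : ℕ} (hn : 0 < n) {j : ℕ}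
    (hj : 1 ≤ j) : roundTrans (A.rounds j) (ψ j) (A.soloRun n (j - 1)) (A.soloRun n j) := by
  suffices hstep : A.soloRun n j =
      fun _ => (A.rounds j).update n (msetOf (A.soloRun n (j - 1))) by
    rw [hstep]
    exact roundTrans_update_msetOf _ _ hn _
  funext p
  by_cases hprev : ∀ k, 1 ≤ k → k ≤ j - 1 → A.hasUni k
  · rw [soloRun, soloRun, if_pos hprev, msetOf_soloB]
    by_cases hU : A.hasUni j
    · have hall : ∀ k, 1 ≤ k → k ≤ j → A.hasUni k := fun k hk hkj =>
        (eq_or_lt_of_le hkj).elim (· ▸ hU) fun hlt => hprev k hk (by omega)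
      rw [if_pos hall, (A.rounds j).update_replicate_some hU hn]
      rfl
    · have hall : ¬ ∀ k, 1 ≤ k → k ≤ j → A.hasUni k := fun h => hU (h j hj le_rfl)
      rw [if_neg hall, (A.rounds j).update_eq_none_of_not_hasUni hU]
      · rfl
      · rw [Multiset.filterMap_id_replicate_some, Multiset.toFinset_replicate]
        split_ifs <;> simp
  · have hall : ¬ ∀ k, 1 ≤ k → k ≤ j → A.hasUni k := fun h =>
      hprev fun k hk hkj => h k hk (by omega)
    rw [soloRun, soloRun, if_neg hprev, if_neg hall, msetOf_soloQ, Round.update_replicate_none]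
    rfl

theorem phaseTrans_solo_of_not_hasUni (A : Algo) {i : ℕ} (hi : 1 ≤ i) (hir : i ≤ A.r)
    (hnu : ¬ A.hasUni i) (ψ : PhasePred) {n : ℕ} (hn : 0 < n) :
    phaseTrans A ψ (soloB n) (soloQ n) (soloB n) (soloQ n) := by
  refine ⟨A.soloRun n, by simp [soloRun], fun j hj _ => A.roundTrans_soloRun ψ hn hj,
    fun p => ?_, fun p => ?_⟩
  · by_cases hinput : ∀ k, 1 ≤ k → k ≤ A.ir → A.hasUni k
    · rw [soloRun, if_pos hinput]
      rfl
    · rw [soloRun, if_neg hinput]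
      exact (if_pos (rfl : soloQ n p = none)).symm
  · have hdecide : ¬ ∀ k, 1 ≤ k → k ≤ A.r → A.hasUni k := fun h => hnu (h i hi hir)
    rw [soloRun, if_neg hdecide]
    rfl

lemma not_termination_of_phaseTrans_solo (A : Algo) (C : CommPred)
    (h : ∀ ψ, phaseTrans A ψ (soloB 1) (soloQ 1) (soloB 1) (soloQ 1)) :
    ¬ Termination A C := by
  intro hT
  let E : Exec A C 1 :=
    { inp := fun _ => soloB 1
      dec := fun _ => soloQ 1
      inp0 := fun _ => Option.some_ne_none _
      dec0 := fun _ => rfl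
      step := fun _ => h C.glob
      sporTime := id
      mono := strictMono_id
      sporStep := fun j _ _ => h (C.spor j) }
  obtain ⟨s, hs⟩ := hT 1 one_pos E
  exact hs 0 rfl

end Algo

/-- Lemma 3.  If some round has no uni instruction then for every
phase predicate there is a phase transition `solo →ψ solo` in which no process
decides; consequently the algorithm does not have the termination property. -/
theorem no_uni_no_termination (A : Algo) (i : ℕ) (hi : 1 ≤ i) (hir : i ≤ A.r)
    (hnu : ¬ A.hasUni i) :
    (∀ ψ : PhasePred, ∀ n : ℕ, 0 < n →
        phaseTrans A ψ (soloB n) (soloQ n) (soloB n) (soloQ n)) ∧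
    (∀ C : CommPred, ¬ Termination A C) :=
  have hsolo : ∀ ψ : PhasePred, ∀ n : ℕ, 0 < n →
      phaseTrans A ψ (soloB n) (soloQ n) (soloB n) (soloQ n) :=
    fun ψ _ hn => A.phaseTrans_solo_of_not_hasUni hi hir hnu ψ hn
  ⟨hsolo, fun C => A.not_termination_of_phaseTrans_solo C fun ψ => hsolo ψ 1 one_pos⟩

end HO
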